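/- Let Γ be the random bipartite graph. Then S_{l,r}(Γ) = {σ ∈ Sym_{l,r}(Γ) : σ preserves the parity of cross-types in every (2×2)-subgraph of Γ}. -/

import Mathlib

/-! Preamble: bipartite graphs, the random bipartite graph, side-preserving
permutation groups, switches, switch groups, and related notions. -/

/-- A bipartite graph on a vertex type `V`: the sides `left` and `right`
partition `V`, both sides are nonempty, and `adj` (the relation `P₁`) only holds
from `left` to `right`.  The relation `P₂` is the complement of `adj` on
`left × right`. -/
structure BipartiteGraph (V : Type*) where
  left : Set V
  right : Set V
  adj : V → V → Prop
  left_nonempty : left.Nonempty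
  right_nonempty : right.Nonempty
  union_eq : left ∪ right = Set.univ
  disjoint_sides : Disjoint left right
  adj_dom : ∀ a b, adj a b → a ∈ left ∧ b ∈ right

/-- The two sides of a bipartite graph. -/
inductive BSide : Type
  | l : BSide
  | r : BSide
deriving DecidableEq

namespace BipartiteGraph

variable {V : Type*} (Γ : BipartiteGraph V)

/-- The side of the graph indexed by an element of `BSide`. -/
def side : BSide → Set V
  | BSide.l => Γ.left
  | BSide.r => Γ.right

/-- `Γ` is (isomorphic to) the random bipartite graph: it is countable, both
sides are infinite, and it satisfies the extension properties `Θₙ` for all `n`. -/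
structure IsRandom : Prop where
  countable : Countable V
  left_infinite : Γ.left.Infinite
  right_infinite : Γ.right.Infinite
  ext_left : ∀ X₁ X₂ : Finset V, ↑X₁ ⊆ Γ.left → ↑X₂ ⊆ Γ.left → Disjoint X₁ X₂ →
      ∃ v ∈ Γ.right, (∀ x ∈ X₁, Γ.adj x v) ∧ (∀ x ∈ X₂, ¬ Γ.adj x v)
  ext_right : ∀ X₁ X₂ : Finset V, ↑X₁ ⊆ Γ.right → ↑X₂ ⊆ Γ.right → Disjoint X₁ X₂ →
      ∃ v ∈ Γ.left, (∀ x ∈ X₁, Γ.adj v x) ∧ (∀ x ∈ X₂, ¬ Γ.adj v x)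

/-- `Sym_{l,r}(Γ)`: the group of permutations of `V` preserving both sides. -/
def symLR : Subgroup (Equiv.Perm V) where
  carrier := {g | (∀ v, g v ∈ Γ.left ↔ v ∈ Γ.left) ∧ (∀ v, g v ∈ Γ.right ↔ v ∈ Γ.right)}
  one_mem' := ⟨fun _ => Iff.rfl, fun _ => Iff.rfl⟩
  mul_mem' := by
    rintro a b ⟨hal, har⟩ ⟨hbl, hbr⟩
    exact ⟨fun v => (hal (b v)).trans (hbl v), fun v => (har (b v)).trans (hbr v)⟩
  inv_mem' := by
    rintro a ⟨hal, har⟩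
    refine ⟨fun v => ?_, fun v => ?_⟩
    · have h := hal (a⁻¹ v); simp only [← Equiv.Perm.mul_apply, mul_inv_cancel, Equiv.Perm.one_apply] at h; exact h.symm
    · have h := har (a⁻¹ v); simp only [← Equiv.Perm.mul_apply, mul_inv_cancel, Equiv.Perm.one_apply] at h; exact h.symm

/-- The automorphism group of `Γ`: side-preserving permutations preserving `adj`
(and hence both cross-types). -/
def autGroup : Subgroup (Equiv.Perm V) where
  carrier := {g | g ∈ Γ.symLR ∧ ∀ a b, Γ.adj a b ↔ Γ.adj (g a) (g b)}
  one_mem' := ⟨Γ.symLR.one_mem, fun _ _ => Iff.rfl⟩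
  mul_mem' := by
    rintro a b ⟨ha, ha2⟩ ⟨hb, hb2⟩
    exact ⟨mul_mem ha hb, fun x y => (hb2 x y).trans (ha2 (b x) (b y))⟩
  inv_mem' := by
    rintro a ⟨ha, ha2⟩
    refine ⟨inv_mem ha, fun x y => ?_⟩
    have h := ha2 (a⁻¹ x) (a⁻¹ y)
    simp only [← Equiv.Perm.mul_apply, mul_inv_cancel, Equiv.Perm.one_apply] at h
    exact h.symm

/-- A permutation `g` is a switch with respect to a set `A` if it preserves the
sides and, for every cross-edge `(a, b)`, the cross-type of `(a, b)` is preserved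
if and only if `|{a, b} ∩ A| ≠ 1`. -/
def IsSwitch (g : Equiv.Perm V) (A : Set V) : Prop :=
  g ∈ Γ.symLR ∧ ∀ a ∈ Γ.left, ∀ b ∈ Γ.right,
    ((Γ.adj a b ↔ Γ.adj (g a) (g b)) ↔ ({a, b} ∩ A : Set V).ncard ≠ 1)

/-- The restriction of a map `g` to a set `S` is a switch with respect to `A`:
the condition of `IsSwitch` holds for all cross-edges inside `S`. -/
def IsSwitchOn (g : V → V) (S : Set V) (A : Set V) : Prop :=
  ∀ a ∈ S ∩ Γ.left, ∀ b ∈ S ∩ Γ.right,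
    ((Γ.adj a b ↔ Γ.adj (g a) (g b)) ↔ ({a, b} ∩ A : Set V).ncard ≠ 1)

/-- The restriction of a map `g` to a set `S` is an isomorphism: `g` preserves
the cross-type of every cross-edge inside `S`. -/
def IsIsoOn (g : V → V) (S : Set V) : Prop :=
  ∀ a ∈ S ∩ Γ.left, ∀ b ∈ S ∩ Γ.right, (Γ.adj a b ↔ Γ.adj (g a) (g b))

end BipartiteGraph

/-- A subgroup of the full symmetric group is closed (in the topology of
pointwise convergence) iff it contains every permutation which agrees with some
member of the subgroup on each finite subset. -/
def IsClosedSubgroup {V : Type*} (G : Subgroup (Equiv.Perm V)) : Prop :=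
  ∀ g : Equiv.Perm V, (∀ F : Finset V, ∃ h ∈ G, ∀ x ∈ F, h x = g x) → g ∈ G

/-- The closed subgroup generated by a set of permutations: the intersection of
all closed subgroups containing the set. -/
def closedClosure {V : Type*} (S : Set (Equiv.Perm V)) : Subgroup (Equiv.Perm V) :=
  sInf {G : Subgroup (Equiv.Perm V) | IsClosedSubgroup G ∧ S ⊆ ↑G}

namespace BipartiteGraph

variable {V : Type*} (Γ : BipartiteGraph V)

/-- The switch group `S_X(Γ)`: the closed subgroup of `Sym_{l,r}(Γ)` generated
by `Aut(Γ)` together with all switches with respect to a single vertex `v ∈ R_i`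
for `i ∈ X`. -/
def switchGroup (X : Set BSide) : Subgroup (Equiv.Perm V) :=
  closedClosure ((Γ.autGroup : Set (Equiv.Perm V)) ∪
    {g | ∃ i ∈ X, ∃ v ∈ Γ.side i, Γ.IsSwitch g {v}})

/-- The group `S_X(Γ)* `: the closed subgroup generated by `S_X(Γ)` together with
a switch `ρ` with respect to the whole side `R_l`. -/
def switchGroupStar (X : Set BSide) : Subgroup (Equiv.Perm V) :=
  closedClosure ((Γ.switchGroup X : Set (Equiv.Perm V)) ∪ {g | Γ.IsSwitch g Γ.left})

/-- Membership in `Aut(Γ)*`, the group of side-preserving permutations which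
either preserve all cross-types on `R_l × R_r` or exchange all cross-types on
`R_l × R_r`. -/
def InAutStar (g : Equiv.Perm V) : Prop :=
  g ∈ Γ.symLR ∧
    ((∀ a ∈ Γ.left, ∀ b ∈ Γ.right, (Γ.adj a b ↔ Γ.adj (g a) (g b))) ∨
     (∀ a ∈ Γ.left, ∀ b ∈ Γ.right, (Γ.adj a b ↔ ¬ Γ.adj (g a) (g b))))

/-- The number of cross-edges of cross-type `P₁` inside the set `S`. -/
noncomputable def edgeCount (S : Set V) : ℕ :=
  {p : V × V | p.1 ∈ S ∧ p.2 ∈ S ∧ Γ.adj p.1 p.2}.ncard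

/-- `g` preserves the parity of cross-types on `S`: the number of `P₁`
cross-edges in `S` is even iff the number of `P₁` cross-edges in `g[S]` is even. -/
def PreservesParityOn (g : V → V) (S : Set V) : Prop :=
  Even (Γ.edgeCount S) ↔ Even (Γ.edgeCount (g '' S))

/-- An `(m × n)`-subgraph of `Γ`: a finite set of vertices with `m` vertices on
the left side and `n` vertices on the right side. -/
def IsMNSubgraph (S : Set V) (m n : ℕ) : Prop :=
  S.Finite ∧ (S ∩ Γ.left).ncard = m ∧ (S ∩ Γ.right).ncard = n

end BipartiteGraph


/-!
A permutation `σ ∈ Sym_{l,r}(Γ)` preserves the parity of cross-types on every `2 × 2`-subgraph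
exactly when it is a switch with respect to some, possibly infinite, set `D`: fixing `a₀ ∈ R_l`
and `b₀ ∈ R_r`, the square `{a, a₀, b, b₀}` shows that `(a, b)` changes type iff an odd number
of `(a, b₀)`, `(a₀, b)`, `(a₀, b₀)` do. Automorphisms and switches preserve these parities, and
the parity condition is closed, so `S_{l,r}(Γ)` consists of parity preservers.

Conversely, let `σ` be a switch with respect to `D` and `F` finite. A product `τ` of single-vertex
switches is a switch with respect to `D ∩ F`, so `σ τ⁻¹` is a partial automorphism on `τ[F]`,
and back and forth extends it to some `α ∈ Aut(Γ)`; then `α τ` agrees with `σ` on `F`.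
Single-vertex switches exist because the switched graph `Γ^A` (`A` finite) is again random, so
back and forth also yields an isomorphism `Γ ≅ Γ^A` fixing `A` pointwise, i.e. a switch.
-/

lemma Set.ncard_pair_inter_ne_one_iff {α : Type*} {a b : α} (hab : a ≠ b) (A : Set α) :
    (({a, b} : Set α) ∩ A).ncard ≠ 1 ↔ (a ∈ A ↔ b ∈ A) := by
  by_cases ha : a ∈ A <;> by_cases hb : b ∈ A <;>
    simp [Set.insert_inter_of_mem, Set.insert_inter_of_notMem, ha, hb, hab]

namespace BipartiteGraph

section Sides

variable {V W : Type*} (Γ : BipartiteGraph V)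

lemma mem_left_or_mem_right (v : V) : v ∈ Γ.left ∨ v ∈ Γ.right := by
  rw [← Set.mem_union, Γ.union_eq]
  trivial

lemma mem_right_iff_notMem_left {Γ : BipartiteGraph V} {v : V} :
    v ∈ Γ.right ↔ v ∉ Γ.left :=
  ⟨fun hr hl => Set.disjoint_left.mp Γ.disjoint_sides hl hr,
    (Γ.mem_left_or_mem_right v).resolve_left⟩

lemma exists_mem_side (v : V) : ∃ i ∈ ({BSide.l, BSide.r} : Set BSide), v ∈ Γ.side i := by
  rcases Γ.mem_left_or_mem_right v with hv | hv
  exacts [⟨.l, Or.inl rfl, hv⟩, ⟨.r, Or.inr rfl, hv⟩]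

lemma mem_symLR_of_forall_mem_left_iff {g : Equiv.Perm V}
    (h : ∀ v, v ∈ Γ.left ↔ g v ∈ Γ.left) : g ∈ Γ.symLR :=
  ⟨fun v => (h v).symm, fun v => by
    rw [mem_right_iff_notMem_left, mem_right_iff_notMem_left, not_iff_not, h v]⟩

variable {Γ} {Δ : BipartiteGraph W}

lemma mem_right_iff_of_mem_left_iff {x : V} {y : W} (h : x ∈ Γ.left ↔ y ∈ Δ.left) :
    x ∈ Γ.right ↔ y ∈ Δ.right := by
  rw [mem_right_iff_notMem_left, mem_right_iff_notMem_left, h]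

lemma adj_iff_adj_of_cross {x x' : V} {y y' : W} (hx : x ∈ Γ.left ↔ y ∈ Δ.left)
    (hx' : x' ∈ Γ.right ↔ y' ∈ Δ.right)
    (h : x ∈ Γ.left → x' ∈ Γ.right → (Γ.adj x x' ↔ Δ.adj y y')) :
    Γ.adj x x' ↔ Δ.adj y y' := by
  by_cases hc : x ∈ Γ.left ∧ x' ∈ Γ.right
  · exact h hc.1 hc.2
  · have hc' : ¬(y ∈ Δ.left ∧ y' ∈ Δ.right) := by rwa [← hx, ← hx']
    exact iff_of_false (fun h => hc (Γ.adj_dom _ _ h)) (fun h => hc' (Δ.adj_dom _ _ h))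

end Sides

section Extension

variable {V : Type*} (Γ : BipartiteGraph V)

def swap : BipartiteGraph V where
  left := Γ.right
  right := Γ.left
  adj x y := Γ.adj y x
  left_nonempty := Γ.right_nonempty
  right_nonempty := Γ.left_nonempty
  union_eq := by rw [Set.union_comm, Γ.union_eq]
  disjoint_sides := Γ.disjoint_sides.symm
  adj_dom a b h := (Γ.adj_dom b a h).symm

variable {Γ}

lemma IsRandom.swap (hΓ : Γ.IsRandom) : Γ.swap.IsRandom :=
  ⟨hΓ.countable, hΓ.right_infinite, hΓ.left_infinite, hΓ.ext_right, hΓ.ext_left⟩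

theorem IsRandom.exists_right_adj_iff (hΓ : Γ.IsRandom) {X Y : Set V} (hX : X.Finite)
    (hXl : X ⊆ Γ.left) (hY : Y.Finite) (P : V → Prop) :
    ∃ v ∈ Γ.right, v ∉ Y ∧ ∀ x ∈ X, (Γ.adj x v ↔ P x) := by
  classical
  induction Y, hY using Set.Finite.induction_on generalizing X P with
  | empty =>
    obtain ⟨v, hv, hP, hnP⟩ := hΓ.ext_left (hX.toFinset.filter P) (hX.toFinset.filter (¬ P ·))
      (fun x hx => hXl (by simp_all)) (fun x hx => hXl (by simp_all))
      (Finset.disjoint_filter_filter_not _ _ _)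
    refine ⟨v, hv, Set.notMem_empty v, fun x hx => ⟨fun h => ?_, fun h => hP x (by simp [hx, h])⟩⟩
    by_contra h'
    exact hnP x (by simp [hx, h']) h
  | @insert y Y _ _ ih =>
    -- a fresh left vertex `a` with prescribed adjacency to `v` tells `v` apart from `y`
    obtain ⟨a, ha, haX⟩ := hΓ.left_infinite.exists_notMem_finite hX
    obtain ⟨v, hv, hvY, hP⟩ :=
      ih (hX.insert a) (Set.insert_subset ha hXl) (Function.update P a (¬ Γ.adj a y))
    refine ⟨v, hv, ?_, fun x hx => ?_⟩
    · rintro (rfl | hvY')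
      · simpa using hP a (Set.mem_insert a X)
      · exact hvY hvY'
    · have hxa : x ≠ a := fun h => haX (h ▸ hx)
      simpa [hxa] using hP x (Set.mem_insert_of_mem a hx)

theorem IsRandom.exists_left_adj_iff (hΓ : Γ.IsRandom) {X Y : Set V} (hX : X.Finite)
    (hXr : X ⊆ Γ.right) (hY : Y.Finite) (P : V → Prop) :
    ∃ v ∈ Γ.left, v ∉ Y ∧ ∀ x ∈ X, (Γ.adj v x ↔ P x) :=
  hΓ.swap.exists_right_adj_iff hX hXr hY P

end Extension

section BackAndForth

variable {V W : Type*} (Γ : BipartiteGraph V) (Δ : BipartiteGraph W)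

def IsPartialIso (p : Set (V × W)) : Prop :=
  ∀ q ∈ p, ∀ q' ∈ p, (q.1 = q'.1 ↔ q.2 = q'.2) ∧ (q.1 ∈ Γ.left ↔ q.2 ∈ Δ.left) ∧
    (Γ.adj q.1 q'.1 ↔ Δ.adj q.2 q'.2)

variable {Γ Δ}

namespace IsPartialIso

variable {p : Set (V × W)}

lemma swap (hp : IsPartialIso Γ Δ p) : IsPartialIso Γ.swap Δ.swap p := fun q hq q' hq' =>
  ⟨(hp q hq q' hq').1, mem_right_iff_of_mem_left_iff (hp q hq q' hq').2.1, (hp q' hq' q hq).2.2⟩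

lemma symm (hp : IsPartialIso Γ Δ p) : IsPartialIso Δ Γ (Prod.swap ⁻¹' p) := fun q hq q' hq' =>
  let h := hp q.swap hq q'.swap hq'
  ⟨h.1.symm, h.2.1.symm, h.2.2.symm⟩

lemma forth_of_mem_left (hΔ : Δ.IsRandom) (hp : IsPartialIso Γ Δ p) (hfin : p.Finite)
    {x : V} (hx : x ∈ Γ.left) (hxp : ∀ q ∈ p, q.1 ≠ x) :
    ∃ y, IsPartialIso Γ Δ (insert (x, y) p) := by
  obtain ⟨y, hy, hyp, hadj⟩ := hΔ.exists_left_adj_iff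
    ((hfin.subset (Set.sep_subset _ _)).image Prod.snd) (by rintro _ ⟨q, hq, rfl⟩; exact hq.2)
    (hfin.image Prod.snd) (fun w => ∃ q ∈ p, q.2 = w ∧ Γ.adj x q.1)
  have hxy : ∀ q ∈ p, (x = q.1 ↔ y = q.2) := fun q hq =>
    iff_of_false (hxp q hq).symm (fun h => hyp ⟨q, hq, h.symm⟩)
  have hside : x ∈ Γ.left ↔ y ∈ Δ.left := iff_of_true hx hy
  have hx_right : x ∈ Γ.right → False := fun hxr => mem_right_iff_notMem_left.mp hxr hx
  have hx_adj : ∀ q ∈ p, (Γ.adj x q.1 ↔ Δ.adj y q.2) := by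
    intro q hq
    have hq_right := mem_right_iff_of_mem_left_iff (hp q hq q hq).2.1
    refine adj_iff_adj_of_cross hside hq_right fun _ hq₁ => ?_
    rw [hadj q.2 ⟨q, ⟨hq, hq_right.mp hq₁⟩, rfl⟩]
    exact ⟨fun h => ⟨q, hq, rfl, h⟩, fun ⟨q', hq', h₂, h⟩ => (hp q' hq' q hq).1.mpr h₂ ▸ h⟩
  have hadj_x : ∀ q ∈ insert (x, y) p, (Γ.adj q.1 x ↔ Δ.adj q.2 y) := fun q hq =>
    adj_iff_adj_of_cross (by rcases hq with rfl | hq; exacts [hside, (hp q hq q hq).2.1])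
      (mem_right_iff_of_mem_left_iff hside) fun _ hxr => (hx_right hxr).elim
  refine ⟨y, ?_⟩
  rintro q (rfl | hq) q' (rfl | hq')
  · exact ⟨iff_of_true rfl rfl, hside, hadj_x _ (Set.mem_insert _ _)⟩
  · exact ⟨hxy q' hq', hside, hx_adj q' hq'⟩
  · exact ⟨eq_comm.trans ((hxy q hq).trans eq_comm), (hp q hq q hq).2.1,
      hadj_x q (Set.mem_insert_of_mem _ hq)⟩
  · exact hp q hq q' hq'

lemma forth (hΔ : Δ.IsRandom) (hp : IsPartialIso Γ Δ p) (hfin : p.Finite) (x : V) :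
    ∃ y, IsPartialIso Γ Δ (insert (x, y) p) := by
  by_cases hxp : ∃ q ∈ p, q.1 = x
  · obtain ⟨q, hq, rfl⟩ := hxp
    exact ⟨q.2, by rwa [Set.insert_eq_of_mem hq]⟩
  push Not at hxp
  rcases Γ.mem_left_or_mem_right x with hx | hx
  · exact hp.forth_of_mem_left hΔ hfin hx hxp
  · obtain ⟨y, hy⟩ := hp.swap.forth_of_mem_left hΔ.swap hfin hx hxp
    exact ⟨y, hy.swap⟩

lemma back (hΓ : Γ.IsRandom) (hp : IsPartialIso Γ Δ p) (hfin : p.Finite) (y : W) :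
    ∃ x, IsPartialIso Γ Δ (insert (x, y) p) := by
  obtain ⟨x, hx⟩ := hp.symm.forth hΓ (hfin.preimage Prod.swap_injective.injOn) y
  have hswap : Prod.swap ⁻¹' insert (y, x) (Prod.swap ⁻¹' p) = insert (x, y) p := by
    ext; simp [Prod.ext_iff, and_comm]
  exact ⟨x, hswap ▸ hx.symm⟩

lemma sUnion {S : Set (Set (V × W))} (hd : DirectedOn (· ⊆ ·) S)
    (h : ∀ p ∈ S, IsPartialIso Γ Δ p) : IsPartialIso Γ Δ (⋃₀ S) := by
  rintro q ⟨p, hp, hq⟩ q' ⟨p', hp', hq'⟩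
  obtain ⟨r, hr, hpr, hp'r⟩ := hd p hp p' hp'
  exact h r hr q (hpr hq) q' (hp'r hq')

lemma exists_equiv (hp : IsPartialIso Γ Δ p) (hdom : ∀ x, ∃ y, (x, y) ∈ p)
    (hcod : ∀ y, ∃ x, (x, y) ∈ p) : ∃ e : V ≃ W, ∀ x, (x, e x) ∈ p := by
  choose f hf using hdom
  refine ⟨Equiv.ofBijective f ⟨fun x x' h => (hp _ (hf x) _ (hf x')).1.mpr h, fun y => ?_⟩, hf⟩
  obtain ⟨x, hx⟩ := hcod y
  exact ⟨x, (hp _ (hf x) _ hx).1.mp rfl⟩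

end IsPartialIso

/-- The union of a generic ideal of finite partial isomorphisms is an isomorphism. -/
theorem IsRandom.exists_equiv_extending (hΓ : Γ.IsRandom) (hΔ : Δ.IsRandom)
    {p : Set (V × W)} (hfin : p.Finite) (hp : IsPartialIso Γ Δ p) :
    ∃ e : V ≃ W, (∀ x, x ∈ Γ.left ↔ e x ∈ Δ.left) ∧
      (∀ a b, Γ.adj a b ↔ Δ.adj (e a) (e b)) ∧ ∀ q ∈ p, e q.1 = q.2 := by
  let P := {r : Set (V × W) // r.Finite ∧ IsPartialIso Γ Δ r}
  have := hΓ.countable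
  have := hΔ.countable
  let _ : Encodable (V ⊕ W) := Encodable.ofCountable _
  let D : V ⊕ W → Order.Cofinal P := Sum.elim
    (fun x => ⟨{r | ∃ y, (x, y) ∈ r.1}, fun r =>
      have ⟨y, hy⟩ := r.2.2.forth hΔ r.2.1 x
      ⟨⟨insert (x, y) r.1, r.2.1.insert _, hy⟩, ⟨y, Set.mem_insert _ _⟩, Set.subset_insert _ _⟩⟩)
    (fun y => ⟨{r | ∃ x, (x, y) ∈ r.1}, fun r =>
      have ⟨x, hx⟩ := r.2.2.back hΓ r.2.1 y
      ⟨⟨insert (x, y) r.1, r.2.1.insert _, hx⟩, ⟨x, Set.mem_insert _ _⟩, Set.subset_insert _ _⟩⟩)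
  let I := Order.idealOfCofinals (⟨p, hfin, hp⟩ : P) D
  have hR : IsPartialIso Γ Δ (⋃₀ (Subtype.val '' (I : Set P))) :=
    IsPartialIso.sUnion (directedOn_image.mpr I.directed) (by rintro _ ⟨r, -, rfl⟩; exact r.2.2)
  have hmem {r : P} (hr : r ∈ I) {q : V × W} (hq : q ∈ r.1) :
      q ∈ ⋃₀ (Subtype.val '' (I : Set P)) :=
    ⟨r.1, ⟨r, hr, rfl⟩, hq⟩
  obtain ⟨e, he⟩ := hR.exists_equiv
    (fun x => have ⟨_, ⟨y, hy⟩, hr⟩ := Order.cofinal_meets_idealOfCofinals _ D (.inl x)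
      ⟨y, hmem hr hy⟩)
    (fun y => have ⟨_, ⟨x, hx⟩, hr⟩ := Order.cofinal_meets_idealOfCofinals _ D (.inr y)
      ⟨x, hmem hr hx⟩)
  exact ⟨e, fun x => (hR _ (he x) _ (he x)).2.1, fun a b => (hR _ (he a) _ (he b)).2.2,
    fun q hq => (hR _ (he q.1) _ (hmem (Order.mem_idealOfCofinals _ D) hq)).1.mp rfl⟩

end BackAndForth

section Switches

variable {V : Type*} (Γ : BipartiteGraph V)

def PreservesCrossType (g : V → V) (a b : V) : Prop :=
  Γ.adj a b ↔ Γ.adj (g a) (g b)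

@[simps]
def switch (A : Set V) : BipartiteGraph V where
  left := Γ.left
  right := Γ.right
  adj x y := x ∈ Γ.left ∧ y ∈ Γ.right ∧ (Γ.adj x y ↔ (x ∈ A ↔ y ∈ A))
  left_nonempty := Γ.left_nonempty
  right_nonempty := Γ.right_nonempty
  union_eq := Γ.union_eq
  disjoint_sides := Γ.disjoint_sides
  adj_dom _ _ h := ⟨h.1, h.2.1⟩

variable {Γ}

lemma isSwitch_iff {g : Equiv.Perm V} {A : Set V} :
    Γ.IsSwitch g A ↔ g ∈ Γ.symLR ∧ ∀ a ∈ Γ.left, ∀ b ∈ Γ.right,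
      (Γ.PreservesCrossType g a b ↔ (a ∈ A ↔ b ∈ A)) := by
  refine and_congr_right fun _ => forall₂_congr fun a ha => forall₂_congr fun b hb => ?_
  have hab : a ≠ b := by rintro rfl; exact mem_right_iff_notMem_left.mp hb ha
  rw [Set.ncard_pair_inter_ne_one_iff hab, PreservesCrossType]

theorem IsRandom.switch (hΓ : Γ.IsRandom) {A : Set V} (hA : A.Finite) :
    (Γ.switch A).IsRandom where
  countable := hΓ.countable
  left_infinite := hΓ.left_infinite
  right_infinite := hΓ.right_infinite
  ext_left X₁ X₂ h₁ h₂ hd := by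
    obtain ⟨v, hv, hvA, hadj⟩ := hΓ.exists_right_adj_iff (X₁.finite_toSet.union X₂.finite_toSet)
      (Set.union_subset h₁ h₂) hA (fun x => x ∈ X₁ ↔ x ∉ A)
    refine ⟨v, hv, fun x hx => ⟨h₁ hx, hv, ?_⟩, fun x hx h => ?_⟩
    · simpa [hx, hvA] using hadj x (Or.inl hx)
    · have hx' := hadj x (Or.inr hx)
      have h' := h.2.2
      simp only [Finset.disjoint_right.mp hd hx, false_iff, not_not] at hx'
      simp [hvA, hx'] at h'
  ext_right X₁ X₂ h₁ h₂ hd := by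
    obtain ⟨v, hv, hvA, hadj⟩ := hΓ.exists_left_adj_iff (X₁.finite_toSet.union X₂.finite_toSet)
      (Set.union_subset h₁ h₂) hA (fun x => x ∈ X₁ ↔ x ∉ A)
    refine ⟨v, hv, fun x hx => ⟨hv, h₁ hx, ?_⟩, fun x hx h => ?_⟩
    · simpa [hx, hvA] using hadj x (Or.inl hx)
    · have hx' := hadj x (Or.inr hx)
      have h' := h.2.2
      simp only [Finset.disjoint_right.mp hd hx, false_iff, not_not] at hx'
      simp [hvA, hx'] at h'

theorem IsRandom.exists_mem_autGroup_extending (hΓ : Γ.IsRandom) {p : Set (V × V)}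
    (hfin : p.Finite) (hp : IsPartialIso Γ Γ p) : ∃ α ∈ Γ.autGroup, ∀ q ∈ p, α q.1 = q.2 := by
  obtain ⟨e, hside, hadj, he⟩ := hΓ.exists_equiv_extending hΓ hfin hp
  exact ⟨e, ⟨Γ.mem_symLR_of_forall_mem_left_iff hside, hadj⟩, he⟩

/-- An isomorphism `Γ ≅ Γ.switch A` fixing `A` pointwise is a switch with respect to `A`. -/
theorem IsRandom.exists_isSwitch (hΓ : Γ.IsRandom) {A : Set V} (hA : A.Finite) :
    ∃ s, Γ.IsSwitch s A := by
  have hp : IsPartialIso Γ (Γ.switch A) ((fun a => (a, a)) '' A) := by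
    rintro _ ⟨a, ha, rfl⟩ _ ⟨b, hb, rfl⟩
    refine ⟨Iff.rfl, Iff.rfl, ?_⟩
    have := Γ.adj_dom a b
    simp only [switch_adj, ha, hb]
    tauto
  obtain ⟨s, hside, hadj, hfix⟩ := hΓ.exists_equiv_extending (hΓ.switch hA) (hA.image _) hp
  have hfix' : ∀ a ∈ A, s a = a := fun a ha => hfix (a, a) ⟨a, ha, rfl⟩
  have hA_iff : ∀ x, s x ∈ A ↔ x ∈ A := fun x =>
    ⟨fun h => s.injective (hfix' _ h) ▸ h, fun h => (hfix' x h).symm ▸ h⟩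
  refine ⟨s, isSwitch_iff.mpr ⟨Γ.mem_symLR_of_forall_mem_left_iff hside, fun a ha b hb => ?_⟩⟩
  have hsa : s a ∈ Γ.left := (hside a).mp ha
  have hsb : s b ∈ Γ.right := (mem_right_iff_of_mem_left_iff (hside b)).mp hb
  rw [PreservesCrossType, hadj a b, switch_adj, hA_iff, hA_iff]
  simp only [hsa, hsb, true_and]
  tauto

lemma isSwitch_empty_of_mem_autGroup {g : Equiv.Perm V} (hg : g ∈ Γ.autGroup) :
    Γ.IsSwitch g ∅ :=
  isSwitch_iff.mpr ⟨hg.1, fun a _ b _ => by simp [PreservesCrossType, hg.2 a b]⟩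

lemma IsSwitch.mul {s t : Equiv.Perm V} {A B : Set V} (hs : Γ.IsSwitch s B)
    (ht : Γ.IsSwitch t A) : Γ.IsSwitch (s * t) (symmDiff A (t ⁻¹' B)) := by
  rw [isSwitch_iff] at *
  refine ⟨mul_mem hs.1 ht.1, fun a ha b hb => ?_⟩
  have h₁ := ht.2 a ha b hb
  have h₂ := hs.2 (t a) ((ht.1.1 a).mpr ha) (t b) ((ht.1.2 b).mpr hb)
  simp only [PreservesCrossType, Equiv.Perm.mul_apply, Set.mem_symmDiff,
    Set.mem_preimage] at h₁ h₂ ⊢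
  grind

lemma exists_isSwitch_mem {G : Subgroup (Equiv.Perm V)} (hG : ∀ v, ∃ s ∈ G, Γ.IsSwitch s {v})
    {D : Set V} (hD : D.Finite) : ∃ τ ∈ G, Γ.IsSwitch τ D := by
  induction D, hD using Set.Finite.induction_on with
  | empty => exact ⟨1, G.one_mem, isSwitch_empty_of_mem_autGroup Γ.autGroup.one_mem⟩
  | @insert v D hv _ ih =>
    obtain ⟨τ, hτG, hτ⟩ := ih
    obtain ⟨s, hsG, hs⟩ := hG (τ v)
    refine ⟨s * τ, mul_mem hsG hτG, ?_⟩
    convert hs.mul hτ using 1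
    ext x
    by_cases hx : x = v <;> simp [hx, hv, Set.mem_symmDiff]

lemma IsSwitch.isPartialIso_image {σ τ : Equiv.Perm V} {A B F : Set V} (hσ : Γ.IsSwitch σ A)
    (hτ : Γ.IsSwitch τ B) (hAB : ∀ x ∈ F, x ∈ A ↔ x ∈ B) :
    IsPartialIso Γ Γ ((fun x => (τ x, σ x)) '' F) := by
  rintro _ ⟨x, hx, rfl⟩ _ ⟨y, hy, rfl⟩
  rw [isSwitch_iff] at hσ hτ
  have hside : τ x ∈ Γ.left ↔ σ x ∈ Γ.left := (hτ.1.1 x).trans (hσ.1.1 x).symm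
  refine ⟨τ.injective.eq_iff.trans σ.injective.eq_iff.symm, hside,
    adj_iff_adj_of_cross hside ((hτ.1.2 y).trans (hσ.1.2 y).symm) fun hxl hyr => ?_⟩
  have hσxy := hσ.2 x ((hτ.1.1 x).mp hxl) y ((hτ.1.2 y).mp hyr)
  have hτxy := hτ.2 x ((hτ.1.1 x).mp hxl) y ((hτ.1.2 y).mp hyr)
  rw [hAB x hx, hAB y hy] at hσxy
  unfold PreservesCrossType at hσxy hτxy
  tauto

end Switches

section Parity

variable {V : Type*} {Γ : BipartiteGraph V}

lemma isMNSubgraph_two_two_iff {S : Set V} :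
    Γ.IsMNSubgraph S 2 2 ↔ ∃ a ∈ Γ.left, ∃ a' ∈ Γ.left, ∃ b ∈ Γ.right, ∃ b' ∈ Γ.right,
      a ≠ a' ∧ b ≠ b' ∧ S = {a, a', b, b'} := by
  constructor
  · rintro ⟨-, hl, hr⟩
    obtain ⟨a, a', haa, hL⟩ := Set.ncard_eq_two.mp hl
    obtain ⟨b, b', hbb, hR⟩ := Set.ncard_eq_two.mp hr
    have hS : S = (S ∩ Γ.left) ∪ (S ∩ Γ.right) := by
      rw [← Set.inter_union_distrib_left, Γ.union_eq, Set.inter_univ]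
    have hL' : ∀ x ∈ ({a, a'} : Set V), x ∈ Γ.left := fun x hx => (hL ▸ hx).2
    have hR' : ∀ x ∈ ({b, b'} : Set V), x ∈ Γ.right := fun x hx => (hR ▸ hx).2
    refine ⟨a, hL' a (by simp), a', hL' a' (by simp), b, hR' b (by simp), b', hR' b' (by simp),
      haa, hbb, ?_⟩
    rw [hS, hL, hR, Set.insert_union, Set.singleton_union]
  · rintro ⟨a, ha, a', ha', b, hb, b', hb', haa, hbb, rfl⟩
    have hb₁ := mem_right_iff_notMem_left.mp hb
    have hb₂ := mem_right_iff_notMem_left.mp hb'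
    have ha₁ : a ∉ Γ.right := fun h => mem_right_iff_notMem_left.mp h ha
    have ha₂ : a' ∉ Γ.right := fun h => mem_right_iff_notMem_left.mp h ha'
    refine ⟨Set.toFinite _, ?_, ?_⟩
    · simp [Set.insert_inter_of_mem, Set.insert_inter_of_notMem, ha, ha', hb₁, hb₂, haa]
    · simp [Set.insert_inter_of_mem, Set.insert_inter_of_notMem, hb, hb', ha₁, ha₂, hbb]

lemma IsMNSubgraph.image {σ : Equiv.Perm V} (hσ : σ ∈ Γ.symLR) {S : Set V}
    (hS : Γ.IsMNSubgraph S 2 2) : Γ.IsMNSubgraph (σ '' S) 2 2 := by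
  obtain ⟨a, ha, a', ha', b, hb, b', hb', haa, hbb, rfl⟩ := isMNSubgraph_two_two_iff.mp hS
  exact isMNSubgraph_two_two_iff.mpr ⟨σ a, (hσ.1 a).mpr ha, σ a', (hσ.1 a').mpr ha',
    σ b, (hσ.2 b).mpr hb, σ b', (hσ.2 b').mpr hb', σ.injective.ne haa, σ.injective.ne hbb,
    by simp [Set.image_insert_eq]⟩

lemma even_edgeCount_square {a a' b b' : V} (ha : a ∈ Γ.left) (ha' : a' ∈ Γ.left)
    (hb : b ∈ Γ.right) (hb' : b' ∈ Γ.right) (haa : a ≠ a') (hbb : b ≠ b') :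
    Even (Γ.edgeCount {a, a', b, b'}) ↔
      ((Γ.adj a b ↔ Γ.adj a b') ↔ (Γ.adj a' b ↔ Γ.adj a' b')) := by
  classical
  have hE : {p : V × V | p.1 ∈ ({a, a', b, b'} : Set V) ∧ p.2 ∈ ({a, a', b, b'} : Set V) ∧
      Γ.adj p.1 p.2} = ↑((({a, a'} : Finset V) ×ˢ ({b, b'} : Finset V)).filter
        fun p => Γ.adj p.1 p.2) := by
    ext ⟨x, y⟩
    simp only [Set.mem_ofPred_eq, Set.mem_insert_iff, Set.mem_singleton_iff, Finset.coe_filter,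
      Finset.mem_product, Finset.mem_insert, Finset.mem_singleton]
    constructor
    · rintro ⟨hx, hy, h⟩
      obtain ⟨hxl, hyr⟩ := Γ.adj_dom x y h
      refine ⟨⟨?_, ?_⟩, h⟩
      · rcases hx with rfl | rfl | rfl | rfl <;> simp_all [mem_right_iff_notMem_left]
      · rcases hy with rfl | rfl | rfl | rfl <;> simp_all [mem_right_iff_notMem_left]
    · rintro ⟨⟨hx, hy⟩, h⟩
      exact ⟨by tauto, by tauto, h⟩
  rw [edgeCount, hE, Set.ncard_coe_finset, Finset.card_filter, Finset.sum_product,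
    Finset.sum_pair haa, Finset.sum_pair hbb, Finset.sum_pair hbb]
  simp [Nat.even_add, apply_ite Even, not_iff_not]

lemma preservesParityOn_square_iff {σ : Equiv.Perm V} (hσ : σ ∈ Γ.symLR) {a a' b b' : V}
    (ha : a ∈ Γ.left) (ha' : a' ∈ Γ.left) (hb : b ∈ Γ.right) (hb' : b' ∈ Γ.right)
    (haa : a ≠ a') (hbb : b ≠ b') :
    Γ.PreservesParityOn σ {a, a', b, b'} ↔
      ((Γ.PreservesCrossType σ a b ↔ Γ.PreservesCrossType σ a b') ↔
        (Γ.PreservesCrossType σ a' b ↔ Γ.PreservesCrossType σ a' b')) := by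
  rw [PreservesParityOn, even_edgeCount_square ha ha' hb hb' haa hbb]
  simp only [Set.image_insert_eq, Set.image_singleton]
  rw [even_edgeCount_square ((hσ.1 a).mpr ha) ((hσ.1 a').mpr ha') ((hσ.2 b).mpr hb)
    ((hσ.2 b').mpr hb') (σ.injective.ne haa) (σ.injective.ne hbb)]
  unfold PreservesCrossType
  grind

lemma IsSwitch.preservesParityOn {g : Equiv.Perm V} {A : Set V} (hg : Γ.IsSwitch g A)
    {S : Set V} (hS : Γ.IsMNSubgraph S 2 2) : Γ.PreservesParityOn g S := by
  obtain ⟨a, ha, a', ha', b, hb, b', hb', haa, hbb, rfl⟩ := isMNSubgraph_two_two_iff.mp hS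
  rw [isSwitch_iff] at hg
  rw [preservesParityOn_square_iff hg.1 ha ha' hb hb' haa hbb, hg.2 a ha b hb, hg.2 a ha b' hb',
    hg.2 a' ha' b hb, hg.2 a' ha' b' hb']
  tauto

lemma exists_isSwitch_of_preservesParityOn {σ : Equiv.Perm V} (hσ : σ ∈ Γ.symLR)
    (hpar : ∀ S, Γ.IsMNSubgraph S 2 2 → Γ.PreservesParityOn σ S) : ∃ D, Γ.IsSwitch σ D := by
  obtain ⟨a₀, ha₀⟩ := Γ.left_nonempty
  obtain ⟨b₀, hb₀⟩ := Γ.right_nonempty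
  have hsq : ∀ a ∈ Γ.left, ∀ b ∈ Γ.right,
      (Γ.PreservesCrossType σ a b ↔ Γ.PreservesCrossType σ a b₀) ↔
        (Γ.PreservesCrossType σ a₀ b ↔ Γ.PreservesCrossType σ a₀ b₀) := by
    intro a ha b hb
    rcases eq_or_ne a a₀ with rfl | haa
    · exact Iff.rfl
    rcases eq_or_ne b b₀ with rfl | hbb
    · simp only [iff_self]
    exact (preservesParityOn_square_iff hσ ha ha₀ hb hb₀ haa hbb).mp
      (hpar _ (isMNSubgraph_two_two_iff.mpr ⟨a, ha, a₀, ha₀, b, hb, b₀, hb₀, haa, hbb, rfl⟩))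
  refine ⟨{x | x ∈ Γ.left ∧ ¬Γ.PreservesCrossType σ x b₀ ∨
      x ∈ Γ.right ∧ ¬(Γ.PreservesCrossType σ a₀ x ↔ Γ.PreservesCrossType σ a₀ b₀)},
    isSwitch_iff.mpr ⟨hσ, fun a ha b hb => ?_⟩⟩
  have ha' : a ∉ Γ.right := fun h => mem_right_iff_notMem_left.mp h ha
  have hb' : b ∉ Γ.left := mem_right_iff_notMem_left.mp hb
  have := hsq a ha b hb
  simp only [Set.mem_ofPred_eq, ha, hb, ha', hb', true_and, false_and, or_false, false_or]
  tauto

end Parity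

section ParityGroup

variable {V : Type*} (Γ : BipartiteGraph V)

def parityGroup : Subgroup (Equiv.Perm V) where
  carrier := {σ | σ ∈ Γ.symLR ∧ ∀ S, Γ.IsMNSubgraph S 2 2 → Γ.PreservesParityOn σ S}
  one_mem' := ⟨Γ.symLR.one_mem, fun S _ => by simp [PreservesParityOn]⟩
  mul_mem' := by
    rintro σ τ ⟨hσ, hσS⟩ ⟨hτ, hτS⟩
    refine ⟨mul_mem hσ hτ, fun S hS => ?_⟩
    rw [PreservesParityOn, Equiv.Perm.coe_mul, Set.image_comp]
    exact (hτS S hS).trans (hσS _ (hS.image hτ))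
  inv_mem' := by
    rintro σ ⟨hσ, hσS⟩
    refine ⟨inv_mem hσ, fun S hS => ?_⟩
    simpa [PreservesParityOn, Set.image_image, iff_comm] using hσS _ (hS.image (inv_mem hσ))

lemma isClosedSubgroup_parityGroup : IsClosedSubgroup Γ.parityGroup := by
  intro g hg
  refine ⟨⟨fun v => ?_, fun v => ?_⟩, fun S hS => ?_⟩
  · obtain ⟨h, hh, hv⟩ := hg {v}
    simpa [hv v (Finset.mem_singleton_self v)] using hh.1.1 v
  · obtain ⟨h, hh, hv⟩ := hg {v}
    simpa [hv v (Finset.mem_singleton_self v)] using hh.1.2 v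
  · obtain ⟨h, hh, hS'⟩ := hg hS.1.toFinset
    have := hh.2 S hS
    rwa [PreservesParityOn, Set.image_congr fun x hx => hS' x (hS.1.mem_toFinset.mpr hx)] at this

lemma switchGroup_le_parityGroup (X : Set BSide) : Γ.switchGroup X ≤ Γ.parityGroup := by
  refine sInf_le ⟨Γ.isClosedSubgroup_parityGroup, ?_⟩
  rintro g (hg | ⟨_, _, _, _, hg⟩)
  · exact ⟨hg.1, fun S hS => (isSwitch_empty_of_mem_autGroup hg).preservesParityOn hS⟩
  · exact ⟨hg.1, fun S hS => hg.preservesParityOn hS⟩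

lemma parityGroup_le_switchGroup (hΓ : Γ.IsRandom) :
    Γ.parityGroup ≤ Γ.switchGroup {BSide.l, BSide.r} := by
  rintro σ ⟨hσ, hpar⟩
  obtain ⟨D, hD⟩ := exists_isSwitch_of_preservesParityOn hσ hpar
  refine Subgroup.mem_sInf.mpr fun G ⟨hGc, hGgen⟩ => hGc σ fun F => ?_
  have hsingle (v : V) : ∃ s ∈ G, Γ.IsSwitch s {v} :=
    have ⟨s, hs⟩ := hΓ.exists_isSwitch (Set.finite_singleton v)
    have ⟨i, hi, hv⟩ := Γ.exists_mem_side v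
    ⟨s, hGgen (.inr ⟨i, hi, v, hv, hs⟩), hs⟩
  obtain ⟨τ, hτG, hτ⟩ := exists_isSwitch_mem hsingle (F.finite_toSet.inter_of_right D)
  obtain ⟨α, hα, hατ⟩ := hΓ.exists_mem_autGroup_extending (F.finite_toSet.image _)
    (hD.isPartialIso_image hτ fun x hx => by simp [hx])
  exact ⟨α * τ, mul_mem (hGgen (.inl hα)) hτG, fun x hx => hατ _ ⟨x, hx, rfl⟩⟩

end ParityGroup

end BipartiteGraph

/-- **Lemma 2.2.** `S_{l,r}(Γ)` is exactly the set of side-preserving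
permutations which preserve the parity of cross-types in every
`(2 × 2)`-subgraph of `Γ`. -/
theorem switchGroup_lr_eq_parity_preservers {V : Type*} (Γ : BipartiteGraph V)
    (hΓ : Γ.IsRandom) :
    (Γ.switchGroup {BSide.l, BSide.r} : Set (Equiv.Perm V)) =
      {σ : Equiv.Perm V | σ ∈ Γ.symLR ∧
        ∀ S : Set V, Γ.IsMNSubgraph S 2 2 → Γ.PreservesParityOn (⇑σ) S} :=
  congrArg SetLike.coe
    (le_antisymm (Γ.switchGroup_le_parityGroup _) (Γ.parityGroup_le_switchGroup hΓ))
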